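/- arXiv:1912.09834 — 3 statements merged into one kernel-verified Lean document; each statement's English description precedes it below -/
import Mathlib

section
/- The function α(j,r) as defined is lower semicontinuous on ℝ × [0,∞) (with the extended real topology on the codomain). -/
open ENNReal Topology Filter

/-- The upwind action density `α(j,r)`. -/
noncomputable def alphaFn (j r : ℝ) : ℝ≥0∞ :=
  if 0 < r then ENNReal.ofReal ((max 0 j) ^ 2 / r)
  else if j ≤ 0 then 0 else ⊤

/-- `α` is lower semicontinuous on `ℝ × [0,∞)`. -/
theorem alphaFn_lowerSemicontinuousOn :
    LowerSemicontinuousOn (fun p : ℝ × ℝ => alphaFn p.1 p.2) {p : ℝ × ℝ | 0 ≤ p.2} := by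
  intro p hp
  have hp' : (0:ℝ) ≤ p.2 := hp
  rcases hp'.lt_or_eq with hr | hr
  · -- positive second coordinate: the function is continuous here
    have hopen : {q : ℝ × ℝ | 0 < q.2} ∈ 𝓝 p :=
      (isOpen_lt continuous_const continuous_snd).mem_nhds hr
    have heq : (fun q : ℝ × ℝ => ENNReal.ofReal ((max 0 q.1) ^ 2 / q.2)) =ᶠ[𝓝 p]
        (fun q : ℝ × ℝ => alphaFn q.1 q.2) := by
      filter_upwards [hopen] with q hq
      simp [alphaFn, hq]
    have hcont : ContinuousAt (fun q : ℝ × ℝ => ENNReal.ofReal ((max 0 q.1) ^ 2 / q.2)) p := by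
      apply ENNReal.continuous_ofReal.continuousAt.comp
      exact (((continuous_const.max continuous_fst).pow 2).continuousAt).div
        continuous_snd.continuousAt hr.ne'
    have hcont' : ContinuousAt (fun q : ℝ × ℝ => alphaFn q.1 q.2) p := hcont.congr heq
    exact (hcont'.lowerSemicontinuousAt).lowerSemicontinuousWithinAt _
  · by_cases hj : p.1 ≤ 0
    · intro y hy
      simp [alphaFn, ← hr, hj] at hy
    · push_neg at hj
      intro y hy
      have hytop : y < ⊤ := by simpa [alphaFn, ← hr, not_le.mpr hj] using hy
      set c : ℝ := y.toReal + 1 with hc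
      have hcpos : 0 < c := by positivity
      have hδpos : 0 < (p.1 / 2) ^ 2 / c := by positivity
      have h1 : {q : ℝ × ℝ | p.1 / 2 < q.1} ∈ 𝓝 p :=
        (isOpen_lt continuous_const continuous_fst).mem_nhds (by show p.1 / 2 < p.1; linarith)
      have h2 : {q : ℝ × ℝ | q.2 < (p.1 / 2) ^ 2 / c} ∈ 𝓝 p :=
        (isOpen_lt continuous_snd continuous_const).mem_nhds (by show p.2 < (p.1 / 2) ^ 2 / c; rw [← hr]; exact hδpos)
      filter_upwards [mem_nhdsWithin_of_mem_nhds h1, mem_nhdsWithin_of_mem_nhds h2,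
        self_mem_nhdsWithin] with q hq1 hq2 hq0
      have hq1' : 0 < q.1 := lt_trans (by linarith) hq1
      have hq0' : (0:ℝ) ≤ q.2 := hq0
      rcases hq0'.lt_or_eq with hq2' | hq2'
      · have : alphaFn q.1 q.2 = ENNReal.ofReal ((max 0 q.1) ^ 2 / q.2) := by
          simp [alphaFn, hq2']
        rw [this, gt_iff_lt, ENNReal.lt_ofReal_iff_toReal_lt hytop.ne]
        rw [lt_div_iff₀ hq2']
        have hmax : max 0 q.1 = q.1 := max_eq_right hq1'.le
        rw [hmax]
        have hq2c : q.2 * c < (p.1 / 2) ^ 2 := (lt_div_iff₀ hcpos).mp hq2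
        nlinarith [sq_nonneg (q.1 - p.1 / 2)]
      · have : alphaFn q.1 q.2 = ⊤ := by
          simp [alphaFn, ← hq2', not_le.mpr hq1']
        rw [this]; exact hytop
end

section
/- Continuity of the interaction energy: if K : ℝᵈ×ℝᵈ → ℝ is continuous, symmetric, and satisfies the Lipschitz-quadratic growth condition, and if ρⁿ → ρ narrowly in the space of probability measures with uniformly bounded second moments (in particular ρ, ρⁿ ∈ P₂(ℝᵈ)) and ρⁿ ⇀ ρ, then E(ρⁿ) = (1/2)∬K dρⁿdρⁿ converges to E(ρ) = (1/2)∬K dρdρ. -/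
open MeasureTheory Filter Topology

section Aux

variable {E : Type*} [NormedAddCommGroup E] [NormedSpace ℝ E]

/-- Chaining: the Lipschitz-quadratic condition implies global Lipschitz. -/
lemma kernel_lipschitz (K : E → E → ℝ) (L : ℝ) (hL : 0 < L)
    (hKlip : ∀ x y x' y' : E,
      |K x y - K x' y'| ≤
        L * max (Real.sqrt (‖x - x'‖ ^ 2 + ‖y - y'‖ ^ 2)) (‖x - x'‖ ^ 2 + ‖y - y'‖ ^ 2))
    (x y x' y' : E) : |K x y - K x' y'| ≤ L * (‖x - x'‖ + ‖y - y'‖) := by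
  set a := ‖x - x'‖ with ha
  set b := ‖y - y'‖ with hb
  have ha0 : 0 ≤ a := norm_nonneg _
  have hb0 : 0 ≤ b := norm_nonneg _
  set s := Real.sqrt (a ^ 2 + b ^ 2) with hs
  have hs0 : 0 ≤ s := Real.sqrt_nonneg _
  set N : ℕ := ⌈s⌉₊ + 1 with hNdef
  have hNpos : 0 < (N : ℝ) := by positivity
  have hsN : s ≤ (N : ℝ) := by
    calc s ≤ (⌈s⌉₊ : ℝ) := Nat.le_ceil s
    _ ≤ (N : ℝ) := by exact_mod_cast Nat.le_succ _
  set p : ℕ → E := fun k => x' + ((k : ℝ) / N) • (x - x') with hp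
  set q : ℕ → E := fun k => y' + ((k : ℝ) / N) • (y - y') with hq
  have hp0 : p 0 = x' := by simp [hp]
  have hq0 : q 0 = y' := by simp [hq]
  have hpN : p N = x := by
    simp only [hp, div_self hNpos.ne', one_smul]
    abel
  have hqN : q N = y := by
    simp only [hq, div_self hNpos.ne', one_smul]
    abel
  have hpstep : ∀ k : ℕ, ‖p (k + 1) - p k‖ = a / N := by
    intro k
    have : p (k + 1) - p k = ((1 : ℝ) / N) • (x - x') := by
      simp only [hp]
      rw [show ((k + 1 : ℕ) : ℝ) = (k : ℝ) + 1 by push_cast; ring]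
      rw [show ((k : ℝ) + 1) / N = (k : ℝ) / N + 1 / N by ring, add_smul]
      abel
    rw [this, norm_smul]
    simp [abs_of_nonneg (by positivity : (0:ℝ) ≤ 1 / (N:ℝ)), div_eq_mul_inv, mul_comm]
    exact ha.symm
  have hqstep : ∀ k : ℕ, ‖q (k + 1) - q k‖ = b / N := by
    intro k
    have : q (k + 1) - q k = ((1 : ℝ) / N) • (y - y') := by
      simp only [hq]
      rw [show ((k + 1 : ℕ) : ℝ) = (k : ℝ) + 1 by push_cast; ring]
      rw [show ((k : ℝ) + 1) / N = (k : ℝ) / N + 1 / N by ring, add_smul]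
      abel
    rw [this, norm_smul]
    simp [abs_of_nonneg (by positivity : (0:ℝ) ≤ 1 / (N:ℝ)), div_eq_mul_inv, mul_comm]
    exact hb.symm
  have hstep : ∀ k : ℕ, |K (p (k + 1)) (q (k + 1)) - K (p k) (q k)| ≤ L * (s / N) := by
    intro k
    have h1 := hKlip (p (k + 1)) (q (k + 1)) (p k) (q k)
    rw [hpstep k, hqstep k] at h1
    have hsq : (a / N) ^ 2 + (b / N) ^ 2 = (s / N) ^ 2 := by
      rw [div_pow, div_pow, div_pow, hs, Real.sq_sqrt (by positivity)]
      ring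
    have hsqrt : Real.sqrt ((a / N) ^ 2 + (b / N) ^ 2) = s / N := by
      rw [hsq, Real.sqrt_sq (by positivity)]
    have hsN1 : s / N ≤ 1 := by
      rw [div_le_one hNpos]; exact hsN
    have hle : (s / N) ^ 2 ≤ s / N := by
      nlinarith [div_nonneg hs0 hNpos.le]
    have hmax : max (Real.sqrt ((a / N) ^ 2 + (b / N) ^ 2)) ((a / N) ^ 2 + (b / N) ^ 2)
        ≤ s / N := by
      rw [hsqrt, hsq]
      exact max_le le_rfl hle
    calc |K (p (k + 1)) (q (k + 1)) - K (p k) (q k)| ≤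
        L * max (Real.sqrt ((a / N) ^ 2 + (b / N) ^ 2)) ((a / N) ^ 2 + (b / N) ^ 2) := h1
      _ ≤ L * (s / N) := by
          exact mul_le_mul_of_nonneg_left hmax hL.le
  have htel : K x y - K x' y' =
      ∑ k ∈ Finset.range N, (K (p (k + 1)) (q (k + 1)) - K (p k) (q k)) := by
    rw [Finset.sum_range_sub (fun k => K (p k) (q k)) N, hp0, hq0, hpN, hqN]
  rw [htel]
  calc |∑ k ∈ Finset.range N, (K (p (k + 1)) (q (k + 1)) - K (p k) (q k))|
      ≤ ∑ k ∈ Finset.range N, |K (p (k + 1)) (q (k + 1)) - K (p k) (q k)| :=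
        Finset.abs_sum_le_sum_abs _ _
    _ ≤ ∑ _k ∈ Finset.range N, L * (s / N) := Finset.sum_le_sum fun k _ => hstep k
    _ = N * (L * (s / N)) := by rw [Finset.sum_const, Finset.card_range, nsmul_eq_mul]
    _ = L * s := by rw [mul_comm, mul_assoc, div_mul_cancel₀ s hNpos.ne']
    _ ≤ L * (a + b) := by
        apply mul_le_mul_of_nonneg_left _ hL.le
        rw [hs]
        calc Real.sqrt (a ^ 2 + b ^ 2) ≤ Real.sqrt ((a + b) ^ 2) := by
              apply Real.sqrt_le_sqrt; nlinarith
          _ = a + b := Real.sqrt_sq (by positivity)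

end Aux

noncomputable def myclip (R t : ℝ) : ℝ := max (-R) (min R t)

lemma myclip_continuous (R : ℝ) : Continuous (myclip R) :=
  continuous_const.max (continuous_const.min continuous_id)

lemma myclip_abs_le {R : ℝ} (hR : 0 ≤ R) (t : ℝ) : |myclip R t| ≤ R := by
  rw [abs_le]
  constructor
  · exact le_max_left _ _
  · exact max_le (by linarith) (min_le_left _ _)

lemma myclip_lip (R a b : ℝ) : |myclip R a - myclip R b| ≤ |a - b| := by
  unfold myclip
  calc |max (-R) (min R a) - max (-R) (min R b)|
      = |max (min R a) (-R) - max (min R b) (-R)| := by rw [max_comm (-R), max_comm (-R)]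
    _ ≤ |min R a - min R b| := abs_max_sub_max_le_abs _ _ _
    _ ≤ max |R - R| |a - b| := abs_min_sub_min_le_max _ _ _ _
    _ ≤ |a - b| := by simp

lemma myclip_err {R : ℝ} (hR : 0 < R) (t : ℝ) : |t - myclip R t| ≤ t ^ 2 / R := by
  unfold myclip
  rcases le_or_gt t R with h1 | h1
  · rcases le_or_gt (-R) t with h2 | h2
    · rw [min_eq_right h1, max_eq_right h2]
      simp [sub_self]
      positivity
    · rw [min_eq_right h1, max_eq_left h2.le]
      rw [abs_of_nonpos (by linarith)]
      rw [le_div_iff₀ hR]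
      nlinarith
  · rw [min_eq_left h1.le]
    rw [max_eq_right (by linarith : -R ≤ R)]
    rw [abs_of_nonneg (by linarith)]
    rw [le_div_iff₀ hR]
    nlinarith

lemma integrable_of_abs_bounded {α : Type*} [MeasurableSpace α] [TopologicalSpace α]
    {μ : Measure α} [IsFiniteMeasure μ] {h : α → ℝ}
    (hc : AEStronglyMeasurable h μ) {R : ℝ} (hb : ∀ x, |h x| ≤ R) : Integrable h μ :=
  (integrable_const R).mono' hc (Filter.Eventually.of_forall fun x => by
    simpa [Real.norm_eq_abs] using hb x)

/-- Equi-Lipschitz + pointwise convergence to 0 gives uniform smallness on compacts. -/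
lemma unif_small_on_compact {E : Type*} [NormedAddCommGroup E]
    {s : Set E} (hs : IsCompact s) (F : ℕ → E → ℝ) (C : ℝ) (hC : 0 < C)
    (hlip : ∀ n x x', |F n x - F n x'| ≤ C * ‖x - x'‖)
    (hpt : ∀ x, Tendsto (fun n => F n x) atTop (𝓝 0))
    {ε : ℝ} (hε : 0 < ε) : ∀ᶠ n in atTop, ∀ x ∈ s, |F n x| ≤ ε := by
  set δ := ε / 2 / C with hδ
  have hδ0 : 0 < δ := by positivity
  have hcover : s ⊆ ⋃ x ∈ s, Metric.ball x δ := fun x hx =>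
    Set.mem_biUnion hx (Metric.mem_ball_self hδ0)
  obtain ⟨t, hts, htfin, htcov⟩ :=
    hs.elim_finite_subcover_image (fun x _ => Metric.isOpen_ball) hcover
  have hev : ∀ᶠ n in atTop, ∀ i ∈ t, |F n i| ≤ ε / 2 := by
    rw [eventually_all_finite htfin]
    intro i _
    have := (hpt i).eventually (Metric.closedBall_mem_nhds 0 (by positivity : (0:ℝ) < ε / 2))
    filter_upwards [this] with n hn
    simpa [Real.dist_eq] using hn
  filter_upwards [hev] with n hn x hx
  obtain ⟨i, hit, hxi⟩ := Set.mem_iUnion₂.1 (htcov hx)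
  have hdist : ‖x - i‖ < δ := by
    rw [← dist_eq_norm]; exact hxi
  calc |F n x| ≤ |F n x - F n i| + |F n i| := by
        calc |F n x| = |F n x - F n i + F n i| := by ring_nf
          _ ≤ |F n x - F n i| + |F n i| := abs_add_le _ _
    _ ≤ C * ‖x - i‖ + ε / 2 := add_le_add (hlip n x i) (hn i hit)
    _ ≤ C * δ + ε / 2 := by nlinarith
    _ = ε := by rw [hδ]; field_simp; ring

variable {E : Type*} [NormedAddCommGroup E] [NormedSpace ℝ E] [FiniteDimensional ℝ E]
  [MeasurableSpace E] [BorelSpace E]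

lemma param_bound (f : E → E → ℝ) (R : ℝ)
    (hfb : ∀ x y, |f x y| ≤ R)
    (μ : Measure E) [IsProbabilityMeasure μ] (x : E) :
    |∫ y, f x y ∂μ| ≤ R := by
  have := norm_integral_le_of_norm_le_const (μ := μ) (f := fun y => f x y) (C := R)
    (Filter.Eventually.of_forall fun y => by simpa [Real.norm_eq_abs] using hfb x y)
  simpa [Real.norm_eq_abs, measure_univ] using this

lemma param_lip (f : E → E → ℝ) (L R : ℝ)
    (hfcont : Continuous fun p : E × E => f p.1 p.2)
    (hfb : ∀ x y, |f x y| ≤ R)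
    (hflip : ∀ x y x' y', |f x y - f x' y'| ≤ L * (‖x - x'‖ + ‖y - y'‖))
    (μ : Measure E) [IsProbabilityMeasure μ] (x x' : E) :
    |∫ y, f x y ∂μ - ∫ y, f x' y ∂μ| ≤ L * ‖x - x'‖ := by
  have hcx : ∀ z : E, Continuous (fun y => f z y) := fun z =>
    hfcont.comp (continuous_const.prodMk continuous_id)
  have hix : ∀ z : E, Integrable (fun y => f z y) μ := fun z =>
    integrable_of_abs_bounded ((hcx z).aestronglyMeasurable) (hfb z)
  rw [← integral_sub (hix x) (hix x')]
  have := norm_integral_le_of_norm_le_const (μ := μ)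
    (f := fun y => f x y - f x' y) (C := L * ‖x - x'‖)
    (Filter.Eventually.of_forall fun y => by
      have := hflip x y x' y
      simpa [Real.norm_eq_abs] using this)
  simpa [Real.norm_eq_abs, measure_univ] using this

lemma param_continuous (f : E → E → ℝ) (L R : ℝ) (hL : 0 < L)
    (hfcont : Continuous fun p : E × E => f p.1 p.2)
    (hfb : ∀ x y, |f x y| ≤ R)
    (hflip : ∀ x y x' y', |f x y - f x' y'| ≤ L * (‖x - x'‖ + ‖y - y'‖))
    (μ : Measure E) [IsProbabilityMeasure μ] :
    Continuous (fun x => ∫ y, f x y ∂μ) := by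
  have : LipschitzWith L.toNNReal (fun x => ∫ y, f x y ∂μ) := by
    apply LipschitzWith.of_dist_le_mul
    intro x x'
    rw [Real.dist_eq, dist_eq_norm, Real.coe_toNNReal L hL.le]
    exact param_lip f L R hfcont hfb hflip μ x x'
  exact this.continuous

/-- Central lemma: convergence of double integrals of a bounded Lipschitz function against
product measures, given narrow convergence and uniformly bounded second moments. -/
lemma prod_integral_tendsto
    (f : E → E → ℝ) (R L : ℝ) (hR : 0 < R) (hL : 0 < L)
    (hfcont : Continuous fun p : E × E => f p.1 p.2)
    (hfb : ∀ x y, |f x y| ≤ R)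
    (hflip : ∀ x y x' y', |f x y - f x' y'| ≤ L * (‖x - x'‖ + ‖y - y'‖))
    (ρ : Measure E) (ρn : ℕ → Measure E)
    [IsProbabilityMeasure ρ] [∀ n, IsProbabilityMeasure (ρn n)]
    (hρn2 : ∀ n, Integrable (fun x => ‖x‖ ^ 2) (ρn n))
    (M : ℝ) (hM : ∀ n, (∫ x, ‖x‖ ^ 2 ∂ρn n) ≤ M)
    (hnarrow : ∀ g : BoundedContinuousFunction E ℝ,
      Tendsto (fun n => ∫ x, g x ∂ρn n) atTop (𝓝 (∫ x, g x ∂ρ))) :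
    Tendsto (fun n => ∫ p, f p.1 p.2 ∂((ρn n).prod (ρn n))) atTop
      (𝓝 (∫ p, f p.1 p.2 ∂(ρ.prod ρ))) := by
  have hM0 : 0 ≤ M := le_trans (integral_nonneg fun x => by positivity) (hM 0)
  set g : E → ℝ := fun x => ∫ y, f x y ∂ρ with hg
  set Gn : ℕ → E → ℝ := fun n x => ∫ y, f x y ∂(ρn n) with hGn
  have hfint : ∀ (μ ν : Measure E) [IsProbabilityMeasure μ] [IsProbabilityMeasure ν],
      Integrable (fun p : E × E => f p.1 p.2) (μ.prod ν) := by
    intro μ ν _ _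
    exact integrable_of_abs_bounded hfcont.aestronglyMeasurable (fun p => hfb p.1 p.2)
  have h1 : ∀ n, ∫ p, f p.1 p.2 ∂((ρn n).prod (ρn n)) = ∫ x, Gn n x ∂(ρn n) := fun n =>
    integral_prod _ (hfint _ _)
  have h2 : ∫ p, f p.1 p.2 ∂(ρ.prod ρ) = ∫ x, g x ∂ρ := integral_prod _ (hfint _ _)
  rw [h2]
  -- continuity and bounds of g and Gn
  have hgcont : Continuous g := param_continuous f L R hL hfcont hfb hflip ρ
  have hgb : ∀ x, |g x| ≤ R := param_bound f R hfb ρ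
  have hGncont : ∀ n, Continuous (Gn n) := fun n =>
    param_continuous f L R hL hfcont hfb hflip (ρn n)
  have hGnb : ∀ n x, |Gn n x| ≤ R := fun n => param_bound f R hfb (ρn n)
  have hgint : ∀ (μ : Measure E) [IsProbabilityMeasure μ], Integrable g μ := by
    intro μ _
    exact integrable_of_abs_bounded hgcont.aestronglyMeasurable hgb
  have hGnint : ∀ n, Integrable (Gn n) (ρn n) := fun n =>
    integrable_of_abs_bounded (hGncont n).aestronglyMeasurable (hGnb n)
  -- claim 2 : narrow convergence for g
  have hcx : ∀ z : E, Continuous (fun y => f z y) := fun z =>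
    hfcont.comp (continuous_const.prodMk continuous_id)
  set gB : BoundedContinuousFunction E ℝ :=
    BoundedContinuousFunction.ofNormedAddCommGroup g hgcont R
      (fun x => by simpa [Real.norm_eq_abs] using hgb x) with hgB
  have claim2 : Tendsto (fun n => ∫ x, g x ∂(ρn n)) atTop (𝓝 (∫ x, g x ∂ρ)) := hnarrow gB
  -- claim 1 : the varying part tends to zero
  set F : ℕ → E → ℝ := fun n x => Gn n x - g x with hF
  have hFb : ∀ n x, |F n x| ≤ 2 * R := by
    intro n x
    calc |F n x| ≤ |Gn n x| + |g x| := abs_sub _ _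
      _ ≤ R + R := add_le_add (hGnb n x) (hgb x)
      _ = 2 * R := by ring
  have hFlip : ∀ n x x', |F n x - F n x'| ≤ 2 * L * ‖x - x'‖ := by
    intro n x x'
    have e : F n x - F n x' = (Gn n x - Gn n x') - (g x - g x') := by simp [hF]; ring
    rw [e]
    calc |(Gn n x - Gn n x') - (g x - g x')| ≤ |Gn n x - Gn n x'| + |g x - g x'| := abs_sub _ _
      _ ≤ L * ‖x - x'‖ + L * ‖x - x'‖ :=
          add_le_add (param_lip f L R hfcont hfb hflip (ρn n) x x')
            (param_lip f L R hfcont hfb hflip ρ x x')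
      _ = 2 * L * ‖x - x'‖ := by ring
  have hFpt : ∀ x, Tendsto (fun n => F n x) atTop (𝓝 0) := by
    intro x
    have hx : Tendsto (fun n => Gn n x) atTop (𝓝 (g x)) := by
      set fxB : BoundedContinuousFunction E ℝ :=
        BoundedContinuousFunction.ofNormedAddCommGroup (fun y => f x y) (hcx x) R
          (fun y => by simpa [Real.norm_eq_abs] using hfb x y)
      exact hnarrow fxB
    have := hx.sub_const (g x)
    simpa [hF] using this
  have claim1 : Tendsto (fun n => ∫ x, F n x ∂(ρn n)) atTop (𝓝 0) := by
    rw [Metric.tendsto_nhds]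
    intro ε hε
    set R' : ℝ := Real.sqrt (8 * R * (M + 1) / ε) with hR'
    have hR'pos : 0 < R' := Real.sqrt_pos.2 (by positivity)
    have hR'sq : R' ^ 2 = 8 * R * (M + 1) / ε := Real.sq_sqrt (by positivity)
    set c : ℝ := 2 * R / R' ^ 2 with hc
    have hc0 : 0 < c := by positivity
    have hceq : c = ε / (4 * (M + 1)) := by
      rw [hc, hR'sq]
      field_simp
      ring
    have hcM : c * M ≤ ε / 4 := by
      rw [hceq, div_mul_eq_mul_div, div_le_div_iff₀ (by positivity) (by norm_num)]
      nlinarith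
    have hcR' : c * R' ^ 2 = 2 * R := by
      rw [hc, div_mul_cancel₀]
      positivity
    have hev := unif_small_on_compact (isCompact_closedBall (0 : E) R') F (2 * L)
      (by positivity) hFlip hFpt (ε := ε / 4) (by positivity)
    filter_upwards [hev] with n hn
    have hptw : ∀ x, |F n x| ≤ ε / 4 + c * ‖x‖ ^ 2 := by
      intro x
      by_cases hx : ‖x‖ ≤ R'
      · have hx' : x ∈ Metric.closedBall (0 : E) R' := by
          simpa [Metric.mem_closedBall, dist_eq_norm] using hx
        have := hn x hx'
        nlinarith [mul_nonneg hc0.le (sq_nonneg ‖x‖)]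
      · push_neg at hx
        have h1' : R' ^ 2 ≤ ‖x‖ ^ 2 := by nlinarith [norm_nonneg x]
        have h2' : 2 * R ≤ c * ‖x‖ ^ 2 := by
          rw [← hcR']
          exact mul_le_mul_of_nonneg_left h1' hc0.le
        have := hFb n x
        linarith
    have hFint : Integrable (F n) (ρn n) := (hGnint n).sub (hgint (ρn n))
    have hbd : |∫ x, F n x ∂(ρn n)| ≤ ε / 4 + c * M := by
      calc |∫ x, F n x ∂(ρn n)| ≤ ∫ x, |F n x| ∂(ρn n) := by
            simpa [Real.norm_eq_abs] using
              norm_integral_le_integral_norm (μ := ρn n) (f := F n)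
        _ ≤ ∫ x, (ε / 4 + c * ‖x‖ ^ 2) ∂(ρn n) := by
            apply integral_mono hFint.abs
              ((integrable_const (ε / 4)).add ((hρn2 n).const_mul c))
            exact hptw
        _ = ε / 4 + c * ∫ x, ‖x‖ ^ 2 ∂(ρn n) := by
            rw [integral_add (integrable_const (ε / 4)) ((hρn2 n).const_mul c),
              integral_const, integral_const_mul]
            simp [measure_univ]
        _ ≤ ε / 4 + c * M := by
            have := mul_le_mul_of_nonneg_left (hM n) hc0.le
            linarith
    rw [Real.dist_eq, sub_zero]
    calc |∫ x, F n x ∂(ρn n)| ≤ ε / 4 + c * M := hbd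
      _ ≤ ε / 4 + ε / 4 := by linarith
      _ < ε := by linarith
  -- combine
  have hcomb : Tendsto (fun n => ∫ x, F n x ∂(ρn n) + ∫ x, g x ∂(ρn n)) atTop
      (𝓝 (0 + ∫ x, g x ∂ρ)) := claim1.add claim2
  rw [zero_add] at hcomb
  have heq : ∀ n, ∫ x, F n x ∂(ρn n) + ∫ x, g x ∂(ρn n) = ∫ x, Gn n x ∂(ρn n) := by
    intro n
    rw [integral_sub (hGnint n) (hgint (ρn n))]
    ring
  have := hcomb.congr heq
  exact this.congr fun n => (h1 n).symm

lemma integrable_sq_fst {μ ν : Measure E} [SFinite ν] [IsProbabilityMeasure ν]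
    (hf : Integrable (fun x : E => ‖x‖ ^ 2) μ) :
    Integrable (fun p : E × E => ‖p.1‖ ^ 2) (μ.prod ν) := by
  have h1 : Measure.map Prod.fst (μ.prod ν) = μ := Measure.fst_prod
  have h2 : Integrable (fun x : E => ‖x‖ ^ 2) (Measure.map Prod.fst (μ.prod ν)) := by
    rw [h1]; exact hf
  exact (integrable_map_measure h2.aestronglyMeasurable measurable_fst.aemeasurable).1 h2

lemma integrable_sq_snd {μ ν : Measure E} [SFinite ν] [IsProbabilityMeasure μ]
    (hf : Integrable (fun x : E => ‖x‖ ^ 2) ν) :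
    Integrable (fun p : E × E => ‖p.2‖ ^ 2) (μ.prod ν) := by
  have h1 : Measure.map Prod.snd (μ.prod ν) = ν := Measure.snd_prod
  have h2 : Integrable (fun x : E => ‖x‖ ^ 2) (Measure.map Prod.snd (μ.prod ν)) := by
    rw [h1]; exact hf
  exact (integrable_map_measure h2.aestronglyMeasurable measurable_snd.aemeasurable).1 h2

lemma tail_bound (K : E → E → ℝ)
    (hKcont : Continuous fun p : E × E => K p.1 p.2) (C0 L S Mb : ℝ)
    (hS : 0 < S) (hL : 0 < L) (hC0 : 0 ≤ C0)
    (hgrow : ∀ x y, |K x y| ≤ C0 + L * (‖x‖ + ‖y‖))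
    (μ ν : Measure E) [IsProbabilityMeasure μ] [IsProbabilityMeasure ν]
    (hμ2 : Integrable (fun x : E => ‖x‖ ^ 2) μ) (hν2 : Integrable (fun x : E => ‖x‖ ^ 2) ν)
    (hμM : (∫ x, ‖x‖ ^ 2 ∂μ) ≤ Mb) (hνM : (∫ x, ‖x‖ ^ 2 ∂ν) ≤ Mb) :
    |(∫ p, K p.1 p.2 ∂(μ.prod ν)) - ∫ p, myclip S (K p.1 p.2) ∂(μ.prod ν)| ≤
      3 * (C0 ^ 2 + 2 * L ^ 2 * Mb) / S := by
  have hMb0 : 0 ≤ Mb := le_trans (integral_nonneg fun x => by positivity) hμM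
  have hdom : Integrable
      (fun p : E × E => (C0 + 2 * L) + (L * ‖p.1‖ ^ 2 + L * ‖p.2‖ ^ 2)) (μ.prod ν) :=
    (integrable_const _).add (((integrable_sq_fst hμ2).const_mul L).add
      ((integrable_sq_snd hν2).const_mul L))
  have hKint : Integrable (fun p : E × E => K p.1 p.2) (μ.prod ν) := by
    apply hdom.mono' hKcont.aestronglyMeasurable
    apply Filter.Eventually.of_forall
    rintro ⟨x, y⟩
    have h1 := hgrow x y
    have h2 : ‖x‖ ≤ 1 + ‖x‖ ^ 2 := by nlinarith [norm_nonneg x]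
    have h3 : ‖y‖ ≤ 1 + ‖y‖ ^ 2 := by nlinarith [norm_nonneg y]
    simp only [Real.norm_eq_abs]
    nlinarith [abs_nonneg (K x y)]
  have hfcont : Continuous fun p : E × E => myclip S (K p.1 p.2) :=
    (myclip_continuous S).comp hKcont
  have hfint : Integrable (fun p : E × E => myclip S (K p.1 p.2)) (μ.prod ν) :=
    integrable_of_abs_bounded hfcont.aestronglyMeasurable
      (fun p => myclip_abs_le hS.le (K p.1 p.2))
  have hptw : ∀ p : E × E, |K p.1 p.2 - myclip S (K p.1 p.2)| ≤
      3 * (C0 ^ 2 + L ^ 2 * ‖p.1‖ ^ 2 + L ^ 2 * ‖p.2‖ ^ 2) / S := by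
    rintro ⟨x, y⟩
    refine le_trans (myclip_err hS (K x y)) ?_
    have h1 := hgrow x y
    have h2 := abs_nonneg (K x y)
    have h3 : (K x y) ^ 2 ≤ (C0 + L * (‖x‖ + ‖y‖)) ^ 2 := by
      rw [← sq_abs]
      exact pow_le_pow_left₀ h2 h1 2
    have hnum : (K x y) ^ 2 ≤ 3 * (C0 ^ 2 + L ^ 2 * ‖x‖ ^ 2 + L ^ 2 * ‖y‖ ^ 2) := by
      nlinarith [sq_nonneg (C0 - L * ‖x‖), sq_nonneg (C0 - L * ‖y‖),
        sq_nonneg (L * ‖x‖ - L * ‖y‖)]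
    exact (div_le_div_iff_of_pos_right hS).2 hnum
  have hval : ∫ p, (C0 ^ 2 + L ^ 2 * ‖p.1‖ ^ 2 + L ^ 2 * ‖p.2‖ ^ 2) ∂(μ.prod ν) =
      C0 ^ 2 + L ^ 2 * (∫ x, ‖x‖ ^ 2 ∂μ) + L ^ 2 * (∫ x, ‖x‖ ^ 2 ∂ν) := by
    have i1 : Integrable (fun p : E × E => C0 ^ 2 + L ^ 2 * ‖p.1‖ ^ 2) (μ.prod ν) :=
      (integrable_const _).add ((integrable_sq_fst hμ2).const_mul (L ^ 2))
    have i2 : Integrable (fun p : E × E => L ^ 2 * ‖p.2‖ ^ 2) (μ.prod ν) :=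
      (integrable_sq_snd hν2).const_mul (L ^ 2)
    have A := integral_add (μ := μ.prod ν) i1 i2
    have B := integral_add (μ := μ.prod ν) (integrable_const (C0 ^ 2))
      ((integrable_sq_fst hμ2).const_mul (L ^ 2))
    rw [A, B, integral_const, integral_const_mul, integral_const_mul]
    have e1 : ∫ p : E × E, ‖p.1‖ ^ 2 ∂(μ.prod ν) = ∫ x, ‖x‖ ^ 2 ∂μ := by
      simpa [measure_univ] using
        integral_fun_fst (μ := μ) (ν := ν) (f := fun x : E => ‖x‖ ^ 2)
    have e2 : ∫ p : E × E, ‖p.2‖ ^ 2 ∂(μ.prod ν) = ∫ x, ‖x‖ ^ 2 ∂ν := by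
      simpa [measure_univ] using
        integral_fun_snd (μ := μ) (ν := ν) (f := fun x : E => ‖x‖ ^ 2)
    rw [e1, e2]
    simp [measure_univ]
  rw [← integral_sub hKint hfint]
  calc |∫ p, (K p.1 p.2 - myclip S (K p.1 p.2)) ∂(μ.prod ν)|
      ≤ ∫ p, |K p.1 p.2 - myclip S (K p.1 p.2)| ∂(μ.prod ν) := by
        simpa [Real.norm_eq_abs] using norm_integral_le_integral_norm (μ := μ.prod ν)
          (f := fun p : E × E => K p.1 p.2 - myclip S (K p.1 p.2))
    _ ≤ ∫ p, 3 * (C0 ^ 2 + L ^ 2 * ‖p.1‖ ^ 2 + L ^ 2 * ‖p.2‖ ^ 2) / S ∂(μ.prod ν) := by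
        apply integral_mono (hKint.sub hfint).abs
        · have : Integrable
              (fun p : E × E => (C0 ^ 2 + L ^ 2 * ‖p.1‖ ^ 2 + L ^ 2 * ‖p.2‖ ^ 2)) (μ.prod ν) :=
            ((integrable_const _).add ((integrable_sq_fst hμ2).const_mul (L ^ 2))).add
              ((integrable_sq_snd hν2).const_mul (L ^ 2))
          simpa [mul_comm, mul_div_assoc] using (this.const_mul (3 / S)).congr
            (Filter.Eventually.of_forall fun p => by ring)
        · exact hptw
    _ = (3 / S) * ∫ p, (C0 ^ 2 + L ^ 2 * ‖p.1‖ ^ 2 + L ^ 2 * ‖p.2‖ ^ 2) ∂(μ.prod ν) := by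
        rw [← integral_const_mul]
        congr 1
        funext p
        ring
    _ ≤ 3 * (C0 ^ 2 + 2 * L ^ 2 * Mb) / S := by
        rw [hval]
        have h4 : C0 ^ 2 + L ^ 2 * (∫ x, ‖x‖ ^ 2 ∂μ) + L ^ 2 * (∫ x, ‖x‖ ^ 2 ∂ν) ≤
            C0 ^ 2 + 2 * L ^ 2 * Mb := by nlinarith [sq_nonneg L]
        have h5 : 3 * (C0 ^ 2 + 2 * L ^ 2 * Mb) / S = (3 / S) * (C0 ^ 2 + 2 * L ^ 2 * Mb) := by
          ring
        rw [h5]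
        exact mul_le_mul_of_nonneg_left h4 (by positivity)

/-- Continuity of the interaction energy along narrowly converging sequences of probability
measures with uniformly bounded second moments, for a continuous symmetric kernel with
Lipschitz-quadratic growth. -/
theorem interaction_energy_narrow_continuity {d : ℕ}
    (K : EuclideanSpace ℝ (Fin d) → EuclideanSpace ℝ (Fin d) → ℝ) (L : ℝ) (hL : 0 < L)
    (hKcont : Continuous fun p : EuclideanSpace ℝ (Fin d) × EuclideanSpace ℝ (Fin d) =>
      K p.1 p.2)
    (hKsym : ∀ x y, K x y = K y x)
    (hKlip : ∀ x y x' y' : EuclideanSpace ℝ (Fin d),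
      |K x y - K x' y'| ≤
        L * max (Real.sqrt (‖x - x'‖ ^ 2 + ‖y - y'‖ ^ 2)) (‖x - x'‖ ^ 2 + ‖y - y'‖ ^ 2))
    (ρ : Measure (EuclideanSpace ℝ (Fin d)))
    (ρn : ℕ → Measure (EuclideanSpace ℝ (Fin d)))
    [IsProbabilityMeasure ρ] [∀ n, IsProbabilityMeasure (ρn n)]
    (hρ2 : Integrable (fun x => ‖x‖ ^ 2) ρ)
    (hρn2 : ∀ n, Integrable (fun x => ‖x‖ ^ 2) (ρn n))
    (hunif : ∃ M : ℝ, ∀ n, (∫ x, ‖x‖ ^ 2 ∂ρn n) ≤ M)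
    (hnarrow : ∀ f : BoundedContinuousFunction (EuclideanSpace ℝ (Fin d)) ℝ,
      Tendsto (fun n => ∫ x, f x ∂ρn n) atTop (𝓝 (∫ x, f x ∂ρ))) :
    Tendsto (fun n => (1 / 2 : ℝ) * ∫ p, K p.1 p.2 ∂((ρn n).prod (ρn n))) atTop
      (𝓝 ((1 / 2 : ℝ) * ∫ p, K p.1 p.2 ∂(ρ.prod ρ))) := by
  have klip : ∀ x y x' y' : EuclideanSpace ℝ (Fin d), |K x y - K x' y'| ≤ L * (‖x - x'‖ + ‖y - y'‖) :=
    kernel_lipschitz K L hL hKlip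
  set C0 : ℝ := |K 0 0| with hC0def
  have hC0 : 0 ≤ C0 := abs_nonneg _
  have hgrow : ∀ x y : EuclideanSpace ℝ (Fin d), |K x y| ≤ C0 + L * (‖x‖ + ‖y‖) := by
    intro x y
    have h1 := klip x y 0 0
    simp only [sub_zero] at h1
    calc |K x y| = |K x y - K 0 0 + K 0 0| := by ring_nf
      _ ≤ |K x y - K 0 0| + |K 0 0| := abs_add_le _ _
      _ ≤ L * (‖x‖ + ‖y‖) + C0 := add_le_add h1 le_rfl
      _ = C0 + L * (‖x‖ + ‖y‖) := by ring
  obtain ⟨M, hM⟩ := hunif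
  set Mρ : ℝ := ∫ x, ‖x‖ ^ 2 ∂ρ with hMρdef
  have hMρ0 : 0 ≤ Mρ := integral_nonneg fun x => by positivity
  set Mb : ℝ := max M Mρ with hMbdef
  have hMb0 : 0 ≤ Mb := le_trans hMρ0 (le_max_right _ _)
  have hMbn : ∀ n, (∫ x, ‖x‖ ^ 2 ∂ρn n) ≤ Mb := fun n => (hM n).trans (le_max_left _ _)
  have hMbρ : Mρ ≤ Mb := le_max_right _ _
  suffices hmain : Tendsto (fun n => ∫ p, K p.1 p.2 ∂((ρn n).prod (ρn n))) atTop
      (𝓝 (∫ p, K p.1 p.2 ∂(ρ.prod ρ))) by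
    exact hmain.const_mul (1 / 2 : ℝ)
  rw [Metric.tendsto_nhds]
  intro ε hε
  set T : ℝ := C0 ^ 2 + 2 * L ^ 2 * Mb with hTdef
  have hT0 : 0 ≤ T := by positivity
  set S : ℝ := (12 * T + 1) / ε with hSdef
  have hS : 0 < S := by positivity
  have htail : 3 * T / S ≤ ε / 4 := by
    rw [div_le_iff₀ hS, hSdef]
    have he : ε / 4 * ((12 * T + 1) / ε) = (12 * T + 1) / 4 := by field_simp
    rw [he]
    linarith
  have fb : ∀ x y : EuclideanSpace ℝ (Fin d), |myclip S (K x y)| ≤ S := fun x y => myclip_abs_le hS.le _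
  have fcont : Continuous fun p : EuclideanSpace ℝ (Fin d) × EuclideanSpace ℝ (Fin d) => myclip S (K p.1 p.2) :=
    (myclip_continuous S).comp hKcont
  have flip : ∀ x y x' y' : EuclideanSpace ℝ (Fin d),
      |myclip S (K x y) - myclip S (K x' y')| ≤ L * (‖x - x'‖ + ‖y - y'‖) := fun x y x' y' =>
    (myclip_lip S _ _).trans (klip x y x' y')
  have key := prod_integral_tendsto (fun x y : EuclideanSpace ℝ (Fin d) => myclip S (K x y)) S L hS hL
    fcont fb flip ρ ρn hρn2 Mb hMbn hnarrow
  have hev := Metric.tendsto_nhds.1 key (ε / 2) (by positivity)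
  filter_upwards [hev] with n hn
  have t1 := tail_bound K hKcont C0 L S Mb hS hL hC0 hgrow (ρn n) (ρn n)
    (hρn2 n) (hρn2 n) (hMbn n) (hMbn n)
  have t2 := tail_bound K hKcont C0 L S Mb hS hL hC0 hgrow ρ ρ hρ2 hρ2 hMbρ hMbρ
  rw [Real.dist_eq] at hn ⊢
  set In : ℝ := ∫ p, K p.1 p.2 ∂((ρn n).prod (ρn n))
  set I : ℝ := ∫ p, K p.1 p.2 ∂(ρ.prod ρ)
  set Ifn : ℝ := ∫ p, myclip S (K p.1 p.2) ∂((ρn n).prod (ρn n))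
  set If : ℝ := ∫ p, myclip S (K p.1 p.2) ∂(ρ.prod ρ)
  have tri : |In - I| ≤ |In - Ifn| + |Ifn - If| + |If - I| := by
    calc |In - I| ≤ |In - If| + |If - I| := abs_sub_le _ _ _
      _ ≤ |In - Ifn| + |Ifn - If| + |If - I| := by
          have := abs_sub_le In Ifn If
          linarith
  have h1 : |In - Ifn| ≤ ε / 4 := le_trans t1 htail
  have h3 : |If - I| ≤ ε / 4 := by
    rw [abs_sub_comm]
    exact le_trans t2 htail
  calc |In - I| ≤ |In - Ifn| + |Ifn - If| + |If - I| := tri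
    _ < ε / 4 + ε / 2 + ε / 4 := by
        have h2 : |Ifn - If| < ε / 2 := hn
        linarith
    _ = ε := by ring
end

section
/- Antisymmetric fluxes have lower action: given an action functional A(ρ,j) = (1/2)∬_G [α(dj/d|λ|, dγ₁/d|λ|) + α(−dj/d|λ|, dγ₂/d|λ|)] η d|λ| (γ₁ = ρ⊗μ, γ₂ = μ⊗ρ, λ a common dominating measure), for any flux j with A(ρ,j) < ∞, the antisymmetrization j^as = (j − jᵀ)/2 has the same nonlocal divergence (∬∇̄φ η dj^as = ∬∇̄φ η dj for all test φ) and satisfies A(ρ, j^as) ≤ A(ρ, j). -/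
open MeasureTheory ENNReal

/-- The upwind action density `α(j,r)`. -/
noncomputable def alphaE (j r : ℝ) : ℝ≥0∞ :=
  if 0 < r then ENNReal.ofReal ((max 0 j) ^ 2 / r)
  else if j ≤ 0 then 0 else ⊤


section alphaE

lemma alphaE_measurable {α : Type*} [MeasurableSpace α] {f r : α → ℝ}
    (hf : Measurable f) (hr : Measurable r) :
    Measurable (fun x => alphaE (f x) (r x)) := by
  unfold alphaE
  refine Measurable.ite (measurableSet_lt measurable_const hr) ?_ ?_
  · exact ENNReal.measurable_ofReal.comp (by fun_prop)
  · exact Measurable.ite (measurableSet_le hf measurable_const) measurable_const measurable_const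

lemma alphaE_smul {c : ℝ} (hc : 0 ≤ c) (a : ℝ) {r : ℝ} (hr : 0 ≤ r) :
    alphaE (c * a) (c * r) = ENNReal.ofReal c * alphaE a r := by
  rcases hc.eq_or_lt with rfl | hc
  · simp [alphaE]
  rcases hr.eq_or_lt with rfl | hr
  · simp only [alphaE, mul_zero, lt_irrefl, if_false]
    by_cases ha : a ≤ 0
    · rw [if_pos (by nlinarith), if_pos ha, mul_zero]
    · rw [if_neg (by nlinarith), if_neg ha, ENNReal.mul_top (by simp [hc])]
  · rw [alphaE, alphaE, if_pos hr, if_pos (by positivity), ← ENNReal.ofReal_mul hc.le]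
    congr 1
    have hmax : c * a ⊔ 0 = c * (a ⊔ 0) := by
      rw [mul_max_of_nonneg _ _ hc.le, mul_zero]
    rw [max_comm, hmax, max_comm 0 a]
    field_simp

lemma alphaE_convex (a b : ℝ) {r : ℝ} (hr : 0 ≤ r) :
    alphaE (2⁻¹ * (a + b)) r ≤ 2⁻¹ * alphaE a r + 2⁻¹ * alphaE b r := by
  rcases hr.eq_or_lt with rfl | hr
  · by_cases h : 2⁻¹ * (a + b) ≤ 0
    · simp [alphaE, h]
    · have : ¬ a ≤ 0 ∨ ¬ b ≤ 0 := by by_contra hh; push_neg at hh; nlinarith [hh.1, hh.2]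
      rcases this with h1 | h1 <;>
        simp [alphaE, h1, ENNReal.mul_top, ENNReal.inv_ne_zero, top_add, add_top]
  · rw [alphaE, alphaE, alphaE, if_pos hr, if_pos hr, if_pos hr]
    have h2 : (2⁻¹ : ℝ≥0∞) = ENNReal.ofReal 2⁻¹ := by
      rw [ENNReal.ofReal_inv_of_pos (by norm_num)]; norm_num
    rw [h2, ← ENNReal.ofReal_mul (by norm_num), ← ENNReal.ofReal_mul (by norm_num),
      ← ENNReal.ofReal_add (by positivity) (by positivity)]
    apply ENNReal.ofReal_le_ofReal
    set p := 0 ⊔ a with hp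
    set q := 0 ⊔ b with hq
    have hm1 : 0 ⊔ 2⁻¹ * (a + b) ≤ 2⁻¹ * (p + q) := by
      apply max_le
      · positivity
      · have := le_max_right 0 a
        have := le_max_right 0 b
        rw [hp, hq]; nlinarith [le_max_right 0 a, le_max_right 0 b]
    have hm0 : (0:ℝ) ≤ 0 ⊔ 2⁻¹ * (a + b) := le_max_left _ _
    have key : (0 ⊔ 2⁻¹ * (a + b)) ^ 2 ≤ 2⁻¹ * p ^ 2 + 2⁻¹ * q ^ 2 := by
      nlinarith [sq_nonneg (p - q)]
    calc (0 ⊔ 2⁻¹ * (a + b)) ^ 2 / r ≤ (2⁻¹ * p ^ 2 + 2⁻¹ * q ^ 2) / r := by gcongr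
      _ = 2⁻¹ * (p ^ 2 / r) + 2⁻¹ * (q ^ 2 / r) := by ring

end alphaE

section swapjordan

variable {α : Type*} [MeasurableSpace α]

open SignedMeasure
open scoped NNReal

lemma signed_apply_eq (s : SignedMeasure α) {A : Set α} (hA : MeasurableSet A) :
    s A = (s.toJordanDecomposition.posPart A).toReal -
      (s.toJordanDecomposition.negPart A).toReal := by
  conv_lhs => rw [← s.toSignedMeasure_toJordanDecomposition]
  rw [JordanDecomposition.toSignedMeasure, Measure.toSignedMeasure_sub_apply hA]
  rfl

lemma mutuallySingular_map (e : α ≃ᵐ α) {m1 m2 : Measure α} (h : m1 ⟂ₘ m2) :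
    (m1.map e) ⟂ₘ (m2.map e) := by
  obtain ⟨S, hS, h1, h2⟩ := h
  have hT : MeasurableSet (⇑e.symm ⁻¹' S) := e.symm.measurable hS
  refine ⟨⇑e.symm ⁻¹' S, hT, ?_, ?_⟩
  · rw [Measure.map_apply e.measurable hT, Set.preimage_preimage]
    simpa using h1
  · rw [← Set.preimage_compl,
      Measure.map_apply e.measurable (e.symm.measurable hS.compl), Set.preimage_preimage]
    simpa using h2

/-- Jordan decomposition of the pushforward under a measurable equivalence. -/
lemma toJordanDecomposition_map (e : α ≃ᵐ α) (s : SignedMeasure α) :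
    SignedMeasure.toJordanDecomposition (s.map ⇑e) =
      ⟨s.toJordanDecomposition.posPart.map e, s.toJordanDecomposition.negPart.map e,
        mutuallySingular_map e s.toJordanDecomposition.mutuallySingular⟩ := by
  set J : JordanDecomposition α :=
      ⟨s.toJordanDecomposition.posPart.map e, s.toJordanDecomposition.negPart.map e,
        mutuallySingular_map e s.toJordanDecomposition.mutuallySingular⟩
  have : J.toSignedMeasure = s.map ⇑e := by
    ext A hA
    rw [JordanDecomposition.toSignedMeasure, Measure.toSignedMeasure_sub_apply hA,
      VectorMeasure.map_apply _ e.measurable hA]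
    show ((s.toJordanDecomposition.posPart.map e) A).toReal -
      ((s.toJordanDecomposition.negPart.map e) A).toReal = _
    rw [Measure.map_apply e.measurable hA, Measure.map_apply e.measurable hA,
      signed_apply_eq s (e.measurable hA)]
  rw [← this, JordanDecomposition.toJordanDecomposition_toSignedMeasure]

lemma posPart_map (e : α ≃ᵐ α) (s : SignedMeasure α) :
    (SignedMeasure.toJordanDecomposition (s.map ⇑e)).posPart =
      s.toJordanDecomposition.posPart.map e := by
  rw [toJordanDecomposition_map]

lemma negPart_map (e : α ≃ᵐ α) (s : SignedMeasure α) :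
    (SignedMeasure.toJordanDecomposition (s.map ⇑e)).negPart =
      s.toJordanDecomposition.negPart.map e := by
  rw [toJordanDecomposition_map]

lemma totalVariation_map (e : α ≃ᵐ α) (s : SignedMeasure α) :
    SignedMeasure.totalVariation (s.map ⇑e) = s.totalVariation.map e := by
  unfold SignedMeasure.totalVariation
  rw [posPart_map, negPart_map, Measure.map_add _ _ e.measurable]

lemma coe_nnreal_mk_eq_ofReal {x : ℝ} (hx : 0 ≤ x) :
    (((↑) : ℝ≥0 → ℝ≥0∞) ⟨x, hx⟩) = ENNReal.ofReal x := by
  rw [ENNReal.ofReal, Real.toNNReal_of_nonneg hx]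
  rfl

lemma signed_apply_le (s : SignedMeasure α) {A : Set α} (hA : MeasurableSet A) :
    s A ≤ (s.toJordanDecomposition.posPart A).toReal := by
  rw [signed_apply_eq s hA]
  have := ENNReal.toReal_nonneg (a := s.toJordanDecomposition.negPart A)
  linarith

lemma posPart_sub_le (s t : SignedMeasure α) :
    (s - t).toJordanDecomposition.posPart ≤
      s.toJordanDecomposition.posPart + t.toJordanDecomposition.negPart := by
  obtain ⟨i, hi₁, hi₂, hi₃, hP, hN⟩ := (s - t).toJordanDecomposition_spec
  rw [Measure.le_iff]
  intro A hA
  rw [hP, SignedMeasure.toMeasureOfZeroLE_apply _ hi₂ hi₁ hA]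
  refine (coe_nnreal_mk_eq_ofReal _).le.trans ?_
  have hiA : MeasurableSet (i ∩ A) := hi₁.inter hA
  have hval : (s - t) (i ∩ A) ≤ (s.toJordanDecomposition.posPart (i ∩ A)).toReal +
      (t.toJordanDecomposition.negPart (i ∩ A)).toReal := by
    rw [VectorMeasure.sub_apply]
    have h1 := signed_apply_le s hiA
    have h2 := signed_apply_le (-t) hiA
    rw [VectorMeasure.neg_apply, SignedMeasure.toJordanDecomposition_neg,
      JordanDecomposition.neg_posPart] at h2
    linarith
  calc ENNReal.ofReal ((s - t) (i ∩ A))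
      ≤ ENNReal.ofReal ((s.toJordanDecomposition.posPart (i ∩ A)).toReal +
          (t.toJordanDecomposition.negPart (i ∩ A)).toReal) := ENNReal.ofReal_le_ofReal hval
    _ ≤ ENNReal.ofReal ((s.toJordanDecomposition.posPart (i ∩ A)).toReal) +
          ENNReal.ofReal ((t.toJordanDecomposition.negPart (i ∩ A)).toReal) :=
        ENNReal.ofReal_add_le
    _ ≤ s.toJordanDecomposition.posPart (i ∩ A) + t.toJordanDecomposition.negPart (i ∩ A) :=
        add_le_add ENNReal.ofReal_toReal_le ENNReal.ofReal_toReal_le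
    _ ≤ s.toJordanDecomposition.posPart A + t.toJordanDecomposition.negPart A :=
        add_le_add (measure_mono Set.inter_subset_right) (measure_mono Set.inter_subset_right)
    _ = _ := (Measure.add_apply _ _ _).symm

lemma negPart_sub_le (s t : SignedMeasure α) :
    (s - t).toJordanDecomposition.negPart ≤
      s.toJordanDecomposition.negPart + t.toJordanDecomposition.posPart := by
  have := posPart_sub_le t s
  rw [show t - s = -(s - t) by abel, SignedMeasure.toJordanDecomposition_neg,
    JordanDecomposition.neg_posPart] at this
  rw [add_comm] at this
  exact this

lemma jordan_sub_add_eq (s t : SignedMeasure α) :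
    (s - t).toJordanDecomposition.posPart + s.toJordanDecomposition.negPart +
        t.toJordanDecomposition.posPart =
      (s - t).toJordanDecomposition.negPart + s.toJordanDecomposition.posPart +
        t.toJordanDecomposition.negPart := by
  ext A hA
  have h1 : (s - t) A = s A - t A := VectorMeasure.sub_apply _ _ _
  rw [signed_apply_eq (s - t) hA, signed_apply_eq s hA, signed_apply_eq t hA] at h1
  simp only [Measure.add_apply]
  have f1 : (s - t).toJordanDecomposition.posPart A ≠ ⊤ := measure_ne_top _ _
  have f2 : (s - t).toJordanDecomposition.negPart A ≠ ⊤ := measure_ne_top _ _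
  have f3 : s.toJordanDecomposition.posPart A ≠ ⊤ := measure_ne_top _ _
  have f4 : s.toJordanDecomposition.negPart A ≠ ⊤ := measure_ne_top _ _
  have f5 : t.toJordanDecomposition.posPart A ≠ ⊤ := measure_ne_top _ _
  have f6 : t.toJordanDecomposition.negPart A ≠ ⊤ := measure_ne_top _ _
  rw [← ENNReal.toReal_eq_toReal_iff' (by simp [ENNReal.add_ne_top, f1, f4, f5])
    (by simp [ENNReal.add_ne_top, f2, f3, f6])]
  rw [ENNReal.toReal_add (ENNReal.add_ne_top.2 ⟨f1, f4⟩) f5,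
    ENNReal.toReal_add f1 f4, ENNReal.toReal_add (ENNReal.add_ne_top.2 ⟨f2, f3⟩) f6,
    ENNReal.toReal_add f2 f3]
  linarith

end swapjordan

/-- A canonical dominating measure `λ` for `|j|`, `|jᵀ|`, `γ₁ = (ρ⊗μ)|_G` and
`γ₂ = (μ⊗ρ)|_G`; by one-homogeneity of `α` the action does not depend on the choice of
dominating measure, so we may use this one. -/
noncomputable def domMeasure {X : Type*} [MeasurableSpace X] (ρ μ : Measure X)
    (G : Set (X × X)) (j : SignedMeasure (X × X)) : Measure (X × X) :=
  j.totalVariation + j.totalVariation.map Prod.swap +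
    (ρ.prod μ).restrict G + (μ.prod ρ).restrict G

/-- The upwind action
`A(μ;ρ,j) = (1/2)∬_G [α(dj/d|λ|, dγ₁/d|λ|) + α(−dj/d|λ|, dγ₂/d|λ|)] η d|λ|`. -/
noncomputable def upwindAction {X : Type*} [MeasurableSpace X] (ρ μ : Measure X)
    (G : Set (X × X)) (η : X × X → ℝ) (j : SignedMeasure (X × X)) : ℝ≥0∞ :=
  (1 / 2 : ℝ≥0∞) * ∫⁻ p in G,
    ENNReal.ofReal (η p) *
      (alphaE (j.rnDeriv (domMeasure ρ μ G j) p)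
          ((((ρ.prod μ).restrict G).rnDeriv (domMeasure ρ μ G j) p).toReal) +
        alphaE (-(j.rnDeriv (domMeasure ρ μ G j) p))
          ((((μ.prod ρ).restrict G).rnDeriv (domMeasure ρ μ G j) p).toReal))
    ∂(domMeasure ρ μ G j)

/-- Integral of `f` on `G` against a signed measure `j`, via its Jordan decomposition. -/
noncomputable def signedIntOn {X : Type*} [MeasurableSpace X] (G : Set (X × X))
    (f : X × X → ℝ) (j : SignedMeasure (X × X)) : ℝ :=
  (∫ p in G, f p ∂j.toJordanDecomposition.posPart) -
    ∫ p in G, f p ∂j.toJordanDecomposition.negPart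

section part1

variable {X : Type*} [MeasurableSpace X]

lemma part1_lemma (G : Set (X × X)) (hG : MeasurableSet G)
    (hGsym : ∀ x y, (x, y) ∈ G → (y, x) ∈ G)
    (f : X × X → ℝ) (hfanti : ∀ p, f (Prod.swap p) = -f p)
    (j : SignedMeasure (X × X))
    (h1 : IntegrableOn f G j.totalVariation)
    (h2 : IntegrableOn f G (SignedMeasure.totalVariation (j.map Prod.swap))) :
    signedIntOn G f ((2⁻¹ : ℝ) • (j - j.map Prod.swap)) = signedIntOn G f j := by
  set sw : (X × X) ≃ᵐ (X × X) := (MeasurableEquiv.prodComm : (X × X) ≃ᵐ (X × X)) with hsw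
  have hswcoe : ⇑sw = Prod.swap := rfl
  set u : SignedMeasure (X × X) := j.map Prod.swap with hu
  have hGpre : Prod.swap ⁻¹' G = G := by
    ext ⟨x, y⟩
    exact ⟨fun h => hGsym _ _ h, fun h => hGsym _ _ h⟩
  set P := (j - u).toJordanDecomposition.posPart
  set N := (j - u).toJordanDecomposition.negPart
  set jp := j.toJordanDecomposition.posPart
  set jn := j.toJordanDecomposition.negPart
  set up := SignedMeasure.toJordanDecomposition u |>.posPart with hup
  set un := SignedMeasure.toJordanDecomposition u |>.negPart with hun
  -- integrability of f on G w.r.t. any measure below |j| + |u|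
  have hsum : IntegrableOn f G (j.totalVariation + SignedMeasure.totalVariation u) := by
    exact h1.add_measure h2
  have hmono : ∀ m : Measure (X × X),
      m ≤ j.totalVariation + SignedMeasure.totalVariation u → IntegrableOn f G m := by
    intro m hm
    exact Integrable.mono_measure hsum (Measure.restrict_mono subset_rfl hm)
  have htvj : j.totalVariation = jp + jn := rfl
  have htvu : SignedMeasure.totalVariation u = up + un := rfl
  have hjp : jp ≤ j.totalVariation + SignedMeasure.totalVariation u := by
    rw [htvj]; exact Measure.le_add_right (Measure.le_add_right le_rfl)
  have hjn : jn ≤ j.totalVariation + SignedMeasure.totalVariation u := by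
    rw [htvj]; exact Measure.le_add_right (Measure.le_add_left le_rfl)
  have hupb : up ≤ j.totalVariation + SignedMeasure.totalVariation u := by
    rw [htvu]; exact Measure.le_add_left (Measure.le_add_right le_rfl)
  have hunb : un ≤ j.totalVariation + SignedMeasure.totalVariation u := by
    rw [htvu]; exact Measure.le_add_left (Measure.le_add_left le_rfl)
  have hPb : P ≤ j.totalVariation + SignedMeasure.totalVariation u := by
    refine le_trans (posPart_sub_le j u) ?_
    rw [htvj, htvu]
    exact add_le_add (Measure.le_add_right le_rfl) (Measure.le_add_left le_rfl)
  have hNb : N ≤ j.totalVariation + SignedMeasure.totalVariation u := by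
    refine le_trans (negPart_sub_le j u) ?_
    rw [htvj, htvu]
    exact add_le_add (Measure.le_add_left le_rfl) (Measure.le_add_right le_rfl)
  have iP := hmono P hPb
  have iN := hmono N hNb
  have ijp := hmono jp hjp
  have ijn := hmono jn hjn
  have iup := hmono up hupb
  have iun := hmono un hunb
  -- the key additivity identity
  have hmeas : P + jn + up = N + jp + un := jordan_sub_add_eq j u
  have hint : (∫ p in G, f p ∂P) + (∫ p in G, f p ∂jn) + (∫ p in G, f p ∂up) =
      (∫ p in G, f p ∂N) + (∫ p in G, f p ∂jp) + (∫ p in G, f p ∂un) := by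
    have e1 : ∫ p in G, f p ∂(P + jn + up) = ∫ p in G, f p ∂(N + jp + un) := by rw [hmeas]
    simp only [Measure.restrict_add] at e1
    rw [integral_add_measure (Integrable.add_measure iP ijn) iup, integral_add_measure iP ijn,
      integral_add_measure (Integrable.add_measure iN ijp) iun, integral_add_measure iN ijp] at e1
    exact e1
  -- the swap identity: ∫ f du± = -∫ f d j∓  (well: = ∫ -f d j±)
  have hmapint : ∀ m : Measure (X × X), ∫ p in G, f p ∂(m.map Prod.swap) =
      - ∫ p in G, f p ∂m := by
    intro m
    rw [← hswcoe, Measure.restrict_map sw.measurable hG, hswcoe, hGpre, ← hswcoe,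
      MeasureTheory.integral_map_equiv]
    simp only [hswcoe, hfanti, integral_neg]
  have hupint : (∫ p in G, f p ∂up) = - ∫ p in G, f p ∂jp := by
    rw [hup, hu, ← hswcoe, posPart_map sw j, hswcoe, hmapint]
  have hunint : (∫ p in G, f p ∂un) = - ∫ p in G, f p ∂jn := by
    rw [hun, hu, ← hswcoe, negPart_map sw j, hswcoe, hmapint]
  -- smul step
  have hsmul : signedIntOn G f ((2⁻¹ : ℝ) • (j - u)) =
      2⁻¹ * ((∫ p in G, f p ∂P) - ∫ p in G, f p ∂N) := by
    unfold signedIntOn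
    rw [SignedMeasure.toJordanDecomposition_smul_real,
      JordanDecomposition.real_smul_posPart_nonneg _ _ (by norm_num : (0:ℝ) ≤ 2⁻¹),
      JordanDecomposition.real_smul_negPart_nonneg _ _ (by norm_num : (0:ℝ) ≤ 2⁻¹)]
    have hc : ∀ m : Measure (X × X), (2⁻¹ : ℝ).toNNReal • m = (2⁻¹ : ℝ≥0∞) • m := by
      intro m
      ext A hA
      rw [Measure.coe_nnreal_smul_apply, Measure.smul_apply, smul_eq_mul]
      congr 1
      rw [← ENNReal.ofReal_coe_nnreal, Real.coe_toNNReal _ (by norm_num),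
        ENNReal.ofReal_inv_of_pos (by norm_num)]
      norm_num
    rw [hc, hc, Measure.restrict_smul, Measure.restrict_smul, integral_smul_measure,
      integral_smul_measure]
    norm_num
    ring
  rw [hsmul]
  unfold signedIntOn
  have := hint
  rw [hupint, hunint] at this
  linarith
end part1

section part2

variable {X : Type*} [MeasurableSpace X]

instance tv_finite (s : SignedMeasure X) : IsFiniteMeasure s.totalVariation := by
  unfold SignedMeasure.totalVariation
  infer_instance

instance domMeasure_sigmaFinite (ρ μ : Measure X) [IsProbabilityMeasure ρ] [SigmaFinite μ]
    (G : Set (X × X)) (j : SignedMeasure (X × X)) : SigmaFinite (domMeasure ρ μ G j) := by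
  unfold domMeasure
  infer_instance

lemma ae_comp_equiv {α β : Type*} [MeasurableSpace α] (e : α ≃ᵐ α) {lam : Measure α}
    (hinv : lam.map e = lam) {f g : α → β} (h : f =ᵐ[lam] g) :
    (fun x => f (e x)) =ᵐ[lam] (fun x => g (e x)) := by
  rw [Filter.EventuallyEq, ae_iff] at h ⊢
  have hset : {x | ¬ f (e x) = g (e x)} = ⇑e ⁻¹' {y | ¬ f y = g y} := rfl
  rw [hset, ← MeasurableEquiv.map_apply e, hinv]
  exact h

lemma map_inv_of_inv {α : Type*} [MeasurableSpace α] (e : α ≃ᵐ α) {lam : Measure α}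
    (hinv : lam.map e = lam) : lam.map e.symm = lam := by
  conv_lhs => rw [← hinv]
  rw [Measure.map_map e.symm.measurable e.measurable]
  have : ⇑e.symm ∘ ⇑e = id := by ext x; simp
  rw [this, Measure.map_id]

lemma rnDeriv_map_of_inv {α : Type*} [MeasurableSpace α] (e : α ≃ᵐ α) (ν lam : Measure α)
    [SigmaFinite ν] [SigmaFinite lam] (hinv : lam.map e = lam) :
    (ν.map e).rnDeriv lam =ᵐ[lam] fun x => ν.rnDeriv lam (e.symm x) := by
  have h := MeasurableEmbedding.rnDeriv_map e.measurableEmbedding ν lam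
  rw [hinv] at h
  have h2 := ae_comp_equiv e.symm (map_inv_of_inv e hinv) h
  have h3 : (fun x => (ν.map ⇑e).rnDeriv lam (e (e.symm x))) =
      (ν.map ⇑e).rnDeriv lam := by ext x; simp
  rw [h3] at h2
  exact h2

section part2b

variable {X : Type*} [MeasurableSpace X]
variable (ρ μ : Measure X) [IsProbabilityMeasure ρ] [SigmaFinite μ]
variable {G : Set (X × X)}

lemma gamma_map_swapX' {ρ μ : Measure X} [SigmaFinite ρ] [SigmaFinite μ]
    (hG : MeasurableSet G) (hGpre : Prod.swap ⁻¹' G = G) :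
    ((ρ.prod μ).restrict G).map Prod.swap = (μ.prod ρ).restrict G := by
  have h := Measure.restrict_map (measurable_swap : Measurable (Prod.swap : X × X → X × X))
    hG (μ := ρ.prod μ)
  rw [hGpre] at h
  rw [← h, Measure.prod_swap]

lemma domMeasure_map_swap (hG : MeasurableSet G) (hGpre : Prod.swap ⁻¹' G = G)
    (j : SignedMeasure (X × X)) :
    (domMeasure ρ μ G j).map Prod.swap = domMeasure ρ μ G j := by
  unfold domMeasure
  have hmeas : Measurable (Prod.swap : X × X → X × X) := measurable_swap
  rw [Measure.map_add _ _ hmeas, Measure.map_add _ _ hmeas, Measure.map_add _ _ hmeas]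
  rw [Measure.map_map hmeas hmeas, Prod.swap_swap_eq, Measure.map_id]
  rw [gamma_map_swapX' hG hGpre, gamma_map_swapX' hG hGpre]
  abel

lemma nnreal_half_smul (m : Measure (X × X)) :
    (2⁻¹ : ℝ).toNNReal • m = (2⁻¹ : ℝ≥0∞) • m := by
  ext A hA
  rw [Measure.coe_nnreal_smul_apply, Measure.smul_apply, smul_eq_mul]
  congr 1
  rw [← ENNReal.ofReal_coe_nnreal, Real.coe_toNNReal _ (by norm_num),
    ENNReal.ofReal_inv_of_pos (by norm_num)]
  norm_num

lemma tv_smul_half (s : SignedMeasure (X × X)) :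
    SignedMeasure.totalVariation ((2⁻¹ : ℝ) • s) = (2⁻¹ : ℝ≥0∞) • s.totalVariation := by
  unfold SignedMeasure.totalVariation
  rw [SignedMeasure.toJordanDecomposition_smul_real,
    JordanDecomposition.real_smul_posPart_nonneg _ _ (by norm_num : (0:ℝ) ≤ 2⁻¹),
    JordanDecomposition.real_smul_negPart_nonneg _ _ (by norm_num : (0:ℝ) ≤ 2⁻¹),
    nnreal_half_smul, nnreal_half_smul, smul_add]

lemma dom_le (hG : MeasurableSet G) (hGpre : Prod.swap ⁻¹' G = G) (j : SignedMeasure (X × X)) :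
    domMeasure ρ μ G ((2⁻¹ : ℝ) • (j - j.map Prod.swap)) ≤ domMeasure ρ μ G j := by
  set sw : (X × X) ≃ᵐ (X × X) := (MeasurableEquiv.prodComm : (X × X) ≃ᵐ (X × X))
  have hswcoe : ⇑sw = Prod.swap := rfl
  set u : SignedMeasure (X × X) := j.map Prod.swap with hu
  set M := j.totalVariation.map Prod.swap with hM
  have htvu : u.totalVariation = M := by
    rw [hu, hM, ← hswcoe, totalVariation_map]
  have hPN : (j - u).totalVariation ≤ j.totalVariation + u.totalVariation := by
    refine le_trans (add_le_add (posPart_sub_le j u) (negPart_sub_le j u)) (le_of_eq ?_)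
    show _ = (_ + _) + (_ + _)
    abel
  have h1 : SignedMeasure.totalVariation ((2⁻¹ : ℝ) • (j - u)) ≤
      (2⁻¹ : ℝ≥0∞) • (j.totalVariation + M) := by
    rw [tv_smul_half]
    rw [Measure.le_iff] at hPN ⊢
    intro A hA
    rw [Measure.smul_apply, Measure.smul_apply, smul_eq_mul, smul_eq_mul]
    refine mul_le_mul_right ?_ _
    have := hPN A hA
    rwa [htvu] at this
  have h2 : (SignedMeasure.totalVariation ((2⁻¹ : ℝ) • (j - u))).map Prod.swap ≤
      (2⁻¹ : ℝ≥0∞) • (M + j.totalVariation) := by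
    refine le_trans (Measure.map_mono h1 measurable_swap) (le_of_eq ?_)
    rw [Measure.map_smul, Measure.map_add _ _ measurable_swap, hM,
      Measure.map_map measurable_swap measurable_swap, Prod.swap_swap_eq, Measure.map_id]
  have hhalf : (2⁻¹ : ℝ≥0∞) • (j.totalVariation + M) + (2⁻¹ : ℝ≥0∞) • (M + j.totalVariation) =
      j.totalVariation + M := by
    have : j.totalVariation + M + (M + j.totalVariation) =
        (j.totalVariation + M) + (j.totalVariation + M) := by abel
    rw [← smul_add, this, ← two_smul ℝ≥0∞, smul_smul]
    rw [show (2⁻¹ : ℝ≥0∞) * 2 = 1 from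
      ENNReal.inv_mul_cancel (by norm_num) (by norm_num), one_smul]
  show SignedMeasure.totalVariation _ + (SignedMeasure.totalVariation _).map Prod.swap +
      (ρ.prod μ).restrict G + (μ.prod ρ).restrict G ≤ _
  calc SignedMeasure.totalVariation ((2⁻¹ : ℝ) • (j - u)) +
        (SignedMeasure.totalVariation ((2⁻¹ : ℝ) • (j - u))).map Prod.swap +
        (ρ.prod μ).restrict G + (μ.prod ρ).restrict G
      ≤ ((2⁻¹ : ℝ≥0∞) • (j.totalVariation + M) + (2⁻¹ : ℝ≥0∞) • (M + j.totalVariation)) +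
        (ρ.prod μ).restrict G + (μ.prod ρ).restrict G := by
        exact add_le_add (add_le_add (add_le_add h1 h2) le_rfl) le_rfl
    _ = _ := by rw [hhalf]; rfl

section part2main

variable {X : Type*} [MeasurableSpace X]

lemma part2_lemma (ρ μ : Measure X) [IsProbabilityMeasure ρ] [SigmaFinite μ]
    (G : Set (X × X)) (hG : MeasurableSet G) (hGsym : ∀ x y, (x, y) ∈ G → (y, x) ∈ G)
    (η : X × X → ℝ) (hηm : Measurable η) (hηnn : ∀ p, 0 ≤ η p)
    (hηsym : ∀ x y, η (x, y) = η (y, x)) (j : SignedMeasure (X × X)) :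
    upwindAction ρ μ G η ((2⁻¹ : ℝ) • (j - j.map Prod.swap)) ≤ upwindAction ρ μ G η j := by
  have hηsw : ∀ q : X × X, η (Prod.swap q) = η q := fun ⟨x, y⟩ => (hηsym x y).symm
  have hGpre : Prod.swap ⁻¹' G = G := by
    ext ⟨x, y⟩
    exact ⟨fun h => hGsym _ _ h, fun h => hGsym _ _ h⟩
  set sw : (X × X) ≃ᵐ (X × X) := (MeasurableEquiv.prodComm : (X × X) ≃ᵐ (X × X)) with hsw
  have hswcoe : ⇑sw = Prod.swap := rfl
  have hswsymm : ⇑sw.symm = Prod.swap := rfl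
  unfold upwindAction
  set u : SignedMeasure (X × X) := j.map Prod.swap with hu
  set ja : SignedMeasure (X × X) := (2⁻¹ : ℝ) • (j - u) with hjadef
  set lam0 : Measure (X × X) := domMeasure ρ μ G j with hlam0
  set lam1 : Measure (X × X) := domMeasure ρ μ G ja with hlam1
  set g1 : Measure (X × X) := (ρ.prod μ).restrict G with hg1def
  set g2 : Measure (X × X) := (μ.prod ρ).restrict G with hg2def
  haveI i0 : SigmaFinite lam0 := by rw [hlam0]; infer_instance
  haveI i1 : SigmaFinite lam1 := by rw [hlam1]; infer_instance
  haveI ig1 : SigmaFinite g1 := by rw [hg1def]; infer_instance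
  haveI ig2 : SigmaFinite g2 := by rw [hg2def]; infer_instance
  have hle : lam1 ≤ lam0 := dom_le ρ μ hG hGpre j
  have hac : lam1 ≪ lam0 := hle.absolutelyContinuous
  set jap := ja.toJordanDecomposition.posPart with hjap
  set jan := ja.toJordanDecomposition.negPart with hjan
  have hja_tv_le : ja.totalVariation ≤ lam1 := by
    rw [hlam1]; unfold domMeasure
    exact Measure.le_add_right (Measure.le_add_right (Measure.le_add_right le_rfl))
  have hg1_le1 : g1 ≤ lam1 := by
    rw [hlam1, hg1def]; unfold domMeasure
    exact Measure.le_add_right (Measure.le_add_left le_rfl)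
  have hg2_le1 : g2 ≤ lam1 := by
    rw [hlam1, hg2def]; unfold domMeasure
    exact Measure.le_add_left le_rfl
  have htvja : ja.totalVariation = jap + jan := rfl
  have hjap_le : jap ≤ lam1 :=
    le_trans (le_trans (Measure.le_add_right le_rfl) htvja.ge) hja_tv_le
  have hjan_le : jan ≤ lam1 :=
    le_trans (le_trans (Measure.le_add_left le_rfl) htvja.ge) hja_tv_le
  -- the density of lam1 wrt lam0
  set w := lam1.rnDeriv lam0 with hwdef
  have hwm : Measurable w := Measure.measurable_rnDeriv _ _
  have hwd : lam0.withDensity w = lam1 := Measure.withDensity_rnDeriv_eq _ _ hac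
  have chain_p : jap.rnDeriv lam1 * w =ᵐ[lam0] jap.rnDeriv lam0 :=
    Measure.rnDeriv_mul_rnDeriv hjap_le.absolutelyContinuous
  have chain_n : jan.rnDeriv lam1 * w =ᵐ[lam0] jan.rnDeriv lam0 :=
    Measure.rnDeriv_mul_rnDeriv hjan_le.absolutelyContinuous
  have chain_1 : g1.rnDeriv lam1 * w =ᵐ[lam0] g1.rnDeriv lam0 :=
    Measure.rnDeriv_mul_rnDeriv hg1_le1.absolutelyContinuous
  have chain_2 : g2.rnDeriv lam1 * w =ᵐ[lam0] g2.rnDeriv lam0 :=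
    Measure.rnDeriv_mul_rnDeriv hg2_le1.absolutelyContinuous
  have hwlt : ∀ᵐ p ∂lam0, w p < ⊤ := Measure.rnDeriv_lt_top lam1 lam0
  -- names for the integrands
  set H1 : (X × X) → ℝ≥0∞ := fun p => ENNReal.ofReal (η p) *
      (alphaE (ja.rnDeriv lam1 p) ((g1.rnDeriv lam1 p).toReal) +
        alphaE (-(ja.rnDeriv lam1 p)) ((g2.rnDeriv lam1 p).toReal)) with hH1def
  set g : (X × X) → ℝ := j.rnDeriv lam0 with hgdef
  set r1 : (X × X) → ℝ := fun p => (g1.rnDeriv lam0 p).toReal with hr1def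
  set r2 : (X × X) → ℝ := fun p => (g2.rnDeriv lam0 p).toReal with hr2def
  set Hja : (X × X) → ℝ≥0∞ := fun p => ENNReal.ofReal (η p) *
      (alphaE (ja.rnDeriv lam0 p) (r1 p) + alphaE (-(ja.rnDeriv lam0 p)) (r2 p)) with hHjadef
  set Hj : (X × X) → ℝ≥0∞ := fun p => ENNReal.ofReal (η p) *
      (alphaE (g p) (r1 p) + alphaE (-(g p)) (r2 p)) with hHjdef
  set T : (X × X) → ℝ≥0∞ := fun p => ENNReal.ofReal (η p) *
      (alphaE (-(g (Prod.swap p))) (r1 p) + alphaE (g (Prod.swap p)) (r2 p)) with hTdef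
  -- measurability
  have hgm : Measurable g := SignedMeasure.measurable_rnDeriv _ _
  have hr1m : Measurable r1 := (Measure.measurable_rnDeriv _ _).ennreal_toReal
  have hr2m : Measurable r2 := (Measure.measurable_rnDeriv _ _).ennreal_toReal
  have hH1m : Measurable H1 := by
    refine (ENNReal.measurable_ofReal.comp hηm).mul (Measurable.add ?_ ?_)
    · exact alphaE_measurable (SignedMeasure.measurable_rnDeriv _ _)
        (Measure.measurable_rnDeriv _ _).ennreal_toReal
    · exact alphaE_measurable (SignedMeasure.measurable_rnDeriv _ _).neg
        (Measure.measurable_rnDeriv _ _).ennreal_toReal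
  have hHjm : Measurable Hj :=
    (ENNReal.measurable_ofReal.comp hηm).mul
      ((alphaE_measurable hgm hr1m).add (alphaE_measurable hgm.neg hr2m))
  have hTm : Measurable T :=
    (ENNReal.measurable_ofReal.comp hηm).mul
      ((alphaE_measurable (hgm.comp measurable_swap).neg hr1m).add
        (alphaE_measurable (hgm.comp measurable_swap) hr2m))
  -- step 1: change of dominating measure
  have e12 : ∫⁻ p in G, H1 p ∂lam1 = ∫⁻ p in G, (w * H1) p ∂lam0 := by
    rw [← hwd]
    exact setLIntegral_withDensity_eq_setLIntegral_mul lam0 hwm hH1m hG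
  have e13 : w * H1 =ᵐ[lam0] Hja := by
    filter_upwards [chain_p, chain_n, chain_1, chain_2, hwlt] with p h1 h2 h3 h4 h5
    have h5' : w p ≠ ⊤ := h5.ne
    set c := (w p).toReal with hcdef
    have hc0 : 0 ≤ c := ENNReal.toReal_nonneg
    have hwof : w p = ENNReal.ofReal c := (ENNReal.ofReal_toReal h5').symm
    have hja0 : ja.rnDeriv lam0 p = c * ja.rnDeriv lam1 p := by
      show (SignedMeasure.rnDeriv ja lam0) p = c * (SignedMeasure.rnDeriv ja lam1) p
      simp only [SignedMeasure.rnDeriv]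
      rw [← h1, ← h2, Pi.mul_apply, Pi.mul_apply, ENNReal.toReal_mul, ENNReal.toReal_mul]
      ring
    have hrr1 : r1 p = c * (g1.rnDeriv lam1 p).toReal := by
      rw [hr1def]
      simp only
      rw [← h3, Pi.mul_apply, ENNReal.toReal_mul]
      ring
    have hrr2 : r2 p = c * (g2.rnDeriv lam1 p).toReal := by
      rw [hr2def]
      simp only
      rw [← h4, Pi.mul_apply, ENNReal.toReal_mul]
      ring
    show w p * H1 p = Hja p
    rw [hH1def, hHjadef]
    simp only
    rw [hwof, hja0, hrr1, hrr2,
      show -(c * ja.rnDeriv lam1 p) = c * -(ja.rnDeriv lam1 p) by ring,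
      alphaE_smul hc0 _ ENNReal.toReal_nonneg, alphaE_smul hc0 _ ENNReal.toReal_nonneg]
    ring
  have e14 : ∫⁻ p in G, (w * H1) p ∂lam0 = ∫⁻ p in G, Hja p ∂lam0 :=
    lintegral_congr_ae (ae_restrict_of_ae e13)
  -- step 2: linearity of signed densities
  have hlin : ja.rnDeriv lam0 =ᵐ[lam0] fun p => 2⁻¹ * (g p - u.rnDeriv lam0 p) := by
    have ha := SignedMeasure.rnDeriv_smul (j - u) lam0 (2⁻¹ : ℝ)
    have hb := SignedMeasure.rnDeriv_sub j u lam0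
    refine ha.trans ?_
    filter_upwards [hb] with p hp
    simp only [Pi.smul_apply, smul_eq_mul, hp, Pi.sub_apply, hgdef]
  -- step 3: swap identities
  have hinv : lam0.map Prod.swap = lam0 := by
    rw [hlam0]; exact domMeasure_map_swap ρ μ hG hGpre j
  have hswu : u.rnDeriv lam0 =ᵐ[lam0] fun p => g (Prod.swap p) := by
    have hpp := rnDeriv_map_of_inv sw j.toJordanDecomposition.posPart lam0 hinv
    have hnn := rnDeriv_map_of_inv sw j.toJordanDecomposition.negPart lam0 hinv
    rw [hswcoe] at hpp hnn
    rw [hswsymm] at hpp hnn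
    have hupos : u.toJordanDecomposition.posPart =
        j.toJordanDecomposition.posPart.map Prod.swap := posPart_map sw j
    have huneg : u.toJordanDecomposition.negPart =
        j.toJordanDecomposition.negPart.map Prod.swap := negPart_map sw j
    filter_upwards [hpp, hnn] with p h1 h2
    show (u.toJordanDecomposition.posPart.rnDeriv lam0 p).toReal -
        (u.toJordanDecomposition.negPart.rnDeriv lam0 p).toReal = g (Prod.swap p)
    rw [hupos, huneg, h1, h2]
    rfl
  have hg21 : g2.rnDeriv lam0 =ᵐ[lam0] fun p => g1.rnDeriv lam0 (Prod.swap p) := by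
    have hmap : g1.map Prod.swap = g2 := by
      rw [hg1def, hg2def]; exact gamma_map_swapX' hG hGpre
    have h := rnDeriv_map_of_inv sw g1 lam0 hinv
    rw [hswcoe, hswsymm] at h
    rw [hmap] at h
    exact h
  have hg12 : g1.rnDeriv lam0 =ᵐ[lam0] fun p => g2.rnDeriv lam0 (Prod.swap p) := by
    have hmap : g2.map Prod.swap = g1 := by
      rw [hg1def, hg2def]; exact gamma_map_swapX' hG hGpre
    have h := rnDeriv_map_of_inv sw g2 lam0 hinv
    rw [hswcoe, hswsymm] at h
    rw [hmap] at h
    exact h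
  -- step 4: pointwise convexity bound
  have hbound : Hja ≤ᵐ[lam0] fun p => 2⁻¹ * Hj p + 2⁻¹ * T p := by
    filter_upwards [hlin, hswu] with p h1 h2
    have h1' : ja.rnDeriv lam0 p = 2⁻¹ * (g p - u.rnDeriv lam0 p) := h1
    have hd : ja.rnDeriv lam0 p = 2⁻¹ * (g p + -(g (Prod.swap p))) := by
      rw [h1', h2]; ring
    have hd' : -(ja.rnDeriv lam0 p) = 2⁻¹ * (-(g p) + g (Prod.swap p)) := by
      rw [h1', h2]; ring
    show ENNReal.ofReal (η p) *
        (alphaE (ja.rnDeriv lam0 p) (r1 p) + alphaE (-(ja.rnDeriv lam0 p)) (r2 p)) ≤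
      2⁻¹ * Hj p + 2⁻¹ * T p
    rw [hd', hd]
    calc ENNReal.ofReal (η p) * (alphaE (2⁻¹ * (g p + -(g (Prod.swap p)))) (r1 p) +
            alphaE (2⁻¹ * (-(g p) + g (Prod.swap p))) (r2 p))
        ≤ ENNReal.ofReal (η p) *
          ((2⁻¹ * alphaE (g p) (r1 p) + 2⁻¹ * alphaE (-(g (Prod.swap p))) (r1 p)) +
            (2⁻¹ * alphaE (-(g p)) (r2 p) + 2⁻¹ * alphaE (g (Prod.swap p)) (r2 p))) :=
          mul_le_mul_right (add_le_add (alphaE_convex _ _ ENNReal.toReal_nonneg)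
            (alphaE_convex _ _ ENNReal.toReal_nonneg)) _
      _ = 2⁻¹ * Hj p + 2⁻¹ * T p := by
          rw [hHjdef, hTdef]
          simp only
          ring
  -- step 5: symmetry of the T integral
  have hTHj : T =ᵐ[lam0] fun p => Hj (Prod.swap p) := by
    filter_upwards [hg12, hg21] with p h1 h2
    have e1 : r1 (Prod.swap p) = r2 p := by
      rw [hr1def, hr2def]
      simp only
      rw [h2]
    have e2 : r2 (Prod.swap p) = r1 p := by
      rw [hr1def, hr2def]
      simp only
      rw [h1]
    show T p = Hj (Prod.swap p)
    rw [hTdef, hHjdef]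
    simp only
    rw [e1, e2, hηsw p]
    ring
  have hswint : ∫⁻ p in G, Hj (Prod.swap p) ∂lam0 = ∫⁻ p in G, Hj p ∂lam0 := by
    have hres : (lam0.restrict G).map ⇑sw = lam0.restrict G := by
      rw [hswcoe]
      conv_lhs => rw [← hGpre]
      rw [← Measure.restrict_map measurable_swap hG, hinv]
    conv_rhs => rw [← hres]
    rw [lintegral_map_equiv Hj sw]
    rfl
  have hTint : ∫⁻ p in G, T p ∂lam0 = ∫⁻ p in G, Hj p ∂lam0 := by
    rw [lintegral_congr_ae (ae_restrict_of_ae hTHj), hswint]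
  -- final assembly
  calc (1 / 2 : ℝ≥0∞) * ∫⁻ p in G, H1 p ∂lam1
      = (1 / 2 : ℝ≥0∞) * ∫⁻ p in G, Hja p ∂lam0 := by rw [e12, e14]
    _ ≤ (1 / 2 : ℝ≥0∞) * ∫⁻ p in G, (2⁻¹ * Hj p + 2⁻¹ * T p) ∂lam0 :=
        mul_le_mul_right (lintegral_mono_ae (ae_restrict_of_ae hbound)) _
    _ = (1 / 2 : ℝ≥0∞) * (2⁻¹ * ∫⁻ p in G, Hj p ∂lam0 + 2⁻¹ * ∫⁻ p in G, T p ∂lam0) := by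
        rw [lintegral_add_left (hHjm.const_mul _), lintegral_const_mul _ hHjm,
          lintegral_const_mul _ hTm]
    _ = (1 / 2 : ℝ≥0∞) * ∫⁻ p in G, Hj p ∂lam0 := by
        rw [hTint, ← add_mul, ENNReal.inv_two_add_inv_two, one_mul]
    _ = _ := rfl

end part2main

end part2b

end part2

/-- Antisymmetric fluxes have lower action: the antisymmetrization
`j^as = (j − jᵀ)/2` of a flux of finite action has the same nonlocal divergence
(`∬ ∇̄φ η dj^as = ∬ ∇̄φ η dj` for all bounded measurable test functions `φ` for which
the integrand is integrable) and `A(μ;ρ,j^as) ≤ A(μ;ρ,j)`. -/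
theorem antisymmetric_flux_lower_action {X : Type*} [MeasurableSpace X]
    (ρ μ : Measure X) [IsProbabilityMeasure ρ] [SigmaFinite μ]
    (G : Set (X × X)) (hG : MeasurableSet G) (hGsym : ∀ x y, (x, y) ∈ G → (y, x) ∈ G)
    (η : X × X → ℝ) (hηm : Measurable η) (hηnn : ∀ p, 0 ≤ η p)
    (hηsym : ∀ x y, η (x, y) = η (y, x))
    (j : SignedMeasure (X × X)) (hA : upwindAction ρ μ G η j ≠ ⊤) :
    (∀ φ : X → ℝ, Measurable φ → (∃ C : ℝ, ∀ x, |φ x| ≤ C) →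
      IntegrableOn (fun p => (φ p.2 - φ p.1) * η p) G j.totalVariation →
      IntegrableOn (fun p => (φ p.2 - φ p.1) * η p) G (SignedMeasure.totalVariation (j.map Prod.swap)) →
      signedIntOn G (fun p => (φ p.2 - φ p.1) * η p)
          ((2⁻¹ : ℝ) • (j - j.map Prod.swap)) =
        signedIntOn G (fun p => (φ p.2 - φ p.1) * η p) j) ∧
    upwindAction ρ μ G η ((2⁻¹ : ℝ) • (j - j.map Prod.swap)) ≤ upwindAction ρ μ G η j := by
  constructor
  · intro φ hφm hbdd hint1 hint2
    refine part1_lemma G hG hGsym _ ?_ j hint1 hint2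
    rintro ⟨x, y⟩
    show (φ x - φ y) * η (y, x) = -((φ y - φ x) * η (x, y))
    rw [← hηsym x y]
    ring
  · exact part2_lemma ρ μ G hG hGsym η hηm hηnn hηsym j
end
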